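/- Let 0 ≤ κ < 1, let u : Δ → Δ be holomorphic, and let v : Δ → {z ∈ ℂ : |z| ≤ κ} be holomorphic. Then there is exactly one pair (z, w) ∈ Δ × Δ with w = u(z) and z = v(w); that is, the horizontal graph {(z, u(z)) : z ∈ Δ} and the vertical graph {(v(w), w) : w ∈ Δ} intersect in exactly one point of the bidisk Δ × Δ. -/

import Mathlib

/-!
An intersection point is a pair `(z, u z)` with `z` a fixed point of `f = v ∘ u`, a holomorphic
self-map of the disk with image in `closedBall 0 κ`. Conjugating `f` by the disk involutions
`mobius a z = (a - z) / (1 - conj a * z)` and applying the Schwarz lemma shows that `f` contracts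
the pseudo-hyperbolic distance `‖mobius a b‖` by the factor `2κ / (1 + κ²) < 1`, the
pseudo-hyperbolic diameter of `closedBall 0 κ`. This gives uniqueness at once, and since the
Euclidean distance is at most twice the pseudo-hyperbolic one, the iterates of `0` form a Cauchy
sequence whose limit is the fixed point.
-/

open Metric Set Complex ComplexConjugate Filter Function

noncomputable def mobius (a z : ℂ) : ℂ := (a - z) / (1 - conj a * z)

@[simp] lemma mobius_self (a : ℂ) : mobius a a = 0 := by simp [mobius]

@[simp] lemma mobius_zero (a : ℂ) : mobius a 0 = a := by simp [mobius]

lemma one_sub_conj_mul_ne_zero {a z : ℂ} (ha : ‖a‖ < 1) (hz : ‖z‖ ≤ 1) : 1 - conj a * z ≠ 0 := by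
  refine norm_pos_iff.1 (lt_of_lt_of_le ?_ (norm_sub_norm_le 1 (conj a * z)))
  simpa using mul_lt_one_of_nonneg_of_lt_one_left (norm_nonneg a) ha hz

lemma norm_one_sub_conj_mul_le (a z : ℂ) : ‖1 - conj a * z‖ ≤ 1 + ‖a‖ * ‖z‖ :=
  (norm_sub_le _ _).trans (by simp)

lemma normSq_one_sub_conj_mul (a z : ℂ) :
    normSq (1 - conj a * z) = normSq (a - z) + (1 - normSq a) * (1 - normSq z) := by
  simp only [normSq_apply, sub_re, sub_im, mul_re, mul_im, one_re, one_im, conj_re, conj_im]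
  ring

lemma one_sub_normSq_mobius {a z : ℂ} (h : 1 - conj a * z ≠ 0) :
    1 - normSq (mobius a z) = (1 - normSq a) * (1 - normSq z) / normSq (1 - conj a * z) := by
  have hD : normSq (1 - conj a * z) ≠ 0 := normSq_eq_zero.not.2 h
  rw [mobius, map_div₀, eq_div_iff hD, sub_mul, div_mul_cancel₀ _ hD, normSq_one_sub_conj_mul]
  ring

lemma mobius_eq_zero_iff {a z : ℂ} (h : 1 - conj a * z ≠ 0) : mobius a z = 0 ↔ a = z := by
  simp [mobius, h, sub_eq_zero]

lemma mobius_mobius {a z : ℂ} (ha : ‖a‖ < 1) (hz : ‖z‖ ≤ 1) : mobius a (mobius a z) = z := by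
  have hz' := one_sub_conj_mul_ne_zero ha hz
  have ha' := one_sub_conj_mul_ne_zero ha ha.le
  have hnum : a - (a - z) / (1 - conj a * z) = (1 - conj a * a) * z / (1 - conj a * z) := by
    rw [eq_div_iff hz', sub_mul, div_mul_cancel₀ _ hz']; ring
  have hden : 1 - conj a * ((a - z) / (1 - conj a * z)) = (1 - conj a * a) / (1 - conj a * z) := by
    rw [eq_div_iff hz', sub_mul, mul_assoc, div_mul_cancel₀ _ hz']; ring
  rw [mobius, mobius, hnum, hden, div_div_div_cancel_right₀ hz', mul_div_cancel_left₀ _ ha']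

lemma norm_mobius_lt_one {a z : ℂ} (ha : ‖a‖ < 1) (hz : ‖z‖ < 1) : ‖mobius a z‖ < 1 := by
  have h := one_sub_conj_mul_ne_zero ha hz.le
  have hpos : 0 < 1 - normSq (mobius a z) := by
    rw [one_sub_normSq_mobius h]
    have : normSq a < 1 := by rw [← Complex.sq_norm]; nlinarith [norm_nonneg a]
    have : normSq z < 1 := by rw [← Complex.sq_norm]; nlinarith [norm_nonneg z]
    have := normSq_pos.2 h
    positivity
  rw [← sq_lt_one_iff₀ (norm_nonneg _), Complex.sq_norm]
  linarith

lemma norm_mobius_le {κ : ℝ} {a z : ℂ} (hκ : κ < 1) (ha : ‖a‖ ≤ κ) (hz : ‖z‖ ≤ κ) :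
    ‖mobius a z‖ ≤ 2 * κ / (1 + κ ^ 2) := by
  have hκ0 : 0 ≤ κ := (norm_nonneg a).trans ha
  have h := one_sub_conj_mul_ne_zero (ha.trans_lt hκ) (hz.trans hκ.le)
  have hD : normSq (1 - conj a * z) ≤ (1 + κ ^ 2) ^ 2 := by
    rw [← Complex.sq_norm]
    gcongr
    exact (norm_one_sub_conj_mul_le a z).trans (by nlinarith [norm_nonneg a, norm_nonneg z])
  have hP : (1 - κ ^ 2) ^ 2 ≤ (1 - normSq a) * (1 - normSq z) := by
    have ha2 : ‖a‖ ^ 2 ≤ κ ^ 2 := pow_le_pow_left₀ (norm_nonneg a) ha 2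
    have hz2 : ‖z‖ ^ 2 ≤ κ ^ 2 := pow_le_pow_left₀ (norm_nonneg z) hz 2
    have hκ2 : κ ^ 2 ≤ 1 := pow_le_one₀ hκ0 hκ.le
    rw [← Complex.sq_norm, ← Complex.sq_norm]
    nlinarith
  have hlow : (1 - κ ^ 2) ^ 2 ≤ (1 + κ ^ 2) ^ 2 * (1 - normSq (mobius a z)) := by
    rw [one_sub_normSq_mobius h, mul_div_assoc', le_div_iff₀ (normSq_pos.2 h)]
    nlinarith
  rw [← pow_le_pow_iff_left₀ (norm_nonneg _) (by positivity) two_ne_zero, Complex.sq_norm, div_pow,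
    le_div_iff₀ (by positivity)]
  nlinarith

lemma dist_le_two_mul_norm_mobius {a z : ℂ} (ha : ‖a‖ < 1) (hz : ‖z‖ ≤ 1) :
    dist a z ≤ 2 * ‖mobius a z‖ := by
  have h := one_sub_conj_mul_ne_zero ha hz
  calc dist a z = ‖1 - conj a * z‖ * ‖mobius a z‖ := by
        rw [Complex.dist_eq, mobius, norm_div, mul_div_cancel₀ _ (norm_ne_zero_iff.2 h)]
    _ ≤ 2 * ‖mobius a z‖ := by
        gcongr
        exact (norm_one_sub_conj_mul_le a z).trans (by nlinarith [norm_nonneg a])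

lemma mapsTo_mobius {a : ℂ} (ha : ‖a‖ < 1) : MapsTo (mobius a) (ball 0 1) (ball 0 1) :=
  fun _ hz ↦ mem_ball_zero_iff.2 (norm_mobius_lt_one ha (mem_ball_zero_iff.1 hz))

lemma differentiableOn_mobius {a : ℂ} (ha : ‖a‖ < 1) : DifferentiableOn ℂ (mobius a) (ball 0 1) :=
  DifferentiableOn.div (by fun_prop) (by fun_prop)
    fun _ hz ↦ one_sub_conj_mul_ne_zero ha (mem_ball_zero_iff.1 hz).le

lemma two_mul_div_one_add_sq_lt_one {κ : ℝ} (hκ : κ < 1) : 2 * κ / (1 + κ ^ 2) < 1 := by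
  rw [div_lt_one (by positivity)]
  nlinarith

lemma norm_mobius_apply_le_mul {f : ℂ → ℂ} {c : ℝ} {a b : ℂ} (hf : DifferentiableOn ℂ f (ball 0 1))
    (hmaps : MapsTo f (ball 0 1) (ball 0 1)) (ha : a ∈ ball 0 1) (hb : b ∈ ball 0 1)
    (hc : ∀ z ∈ ball (0 : ℂ) 1, ‖mobius (f a) (f z)‖ ≤ c) :
    ‖mobius (f a) (f b)‖ ≤ c * ‖mobius a b‖ := by
  have ha' : ‖a‖ < 1 := mem_ball_zero_iff.1 ha
  have hfa : ‖f a‖ < 1 := mem_ball_zero_iff.1 (hmaps ha)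
  set g := mobius (f a) ∘ f ∘ mobius a
  have hg : DifferentiableOn ℂ g (ball 0 1) :=
    (differentiableOn_mobius hfa).comp (hf.comp (differentiableOn_mobius ha') (mapsTo_mobius ha'))
      (hmaps.comp (mapsTo_mobius ha'))
  have hg0 : g 0 = 0 := by simp [g]
  have hgc : MapsTo g (ball 0 1) (closedBall (g 0) c) := fun z hz ↦ by
    rw [hg0, mem_closedBall_zero_iff]
    exact hc _ (mapsTo_mobius ha' hz)
  have hgb : g (mobius a b) = mobius (f a) (f b) := by
    simp [g, mobius_mobius ha' (mem_ball_zero_iff.1 hb).le]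
  simpa [hg0, hgb] using dist_le_div_mul_dist_of_mapsTo_ball hg hgc (mapsTo_mobius ha' hb)

section FixedPoint

variable {f : ℂ → ℂ} {κ : ℝ} (hf : DifferentiableOn ℂ f (ball 0 1))
  (hfκ : MapsTo f (ball 0 1) (closedBall 0 κ)) (hκ : κ < 1)
include hf hfκ hκ

lemma norm_mobius_apply_le {a b : ℂ} (ha : a ∈ ball 0 1) (hb : b ∈ ball 0 1) :
    ‖mobius (f a) (f b)‖ ≤ 2 * κ / (1 + κ ^ 2) * ‖mobius a b‖ :=
  norm_mobius_apply_le_mul hf (hfκ.mono_right (closedBall_subset_ball hκ)) ha hb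
    fun _ hz ↦ norm_mobius_le hκ (mem_closedBall_zero_iff.1 (hfκ ha))
      (mem_closedBall_zero_iff.1 (hfκ hz))

lemma eq_of_isFixedPt {a b : ℂ} (ha : a ∈ ball 0 1) (hb : b ∈ ball 0 1) (hfa : IsFixedPt f a)
    (hfb : IsFixedPt f b) : a = b := by
  have hab := norm_mobius_apply_le hf hfκ hκ ha hb
  rw [hfa.eq, hfb.eq] at hab
  have hc := two_mul_div_one_add_sq_lt_one hκ
  have : mobius a b = 0 := norm_eq_zero.1 (by nlinarith [norm_nonneg (mobius a b)])
  exact (mobius_eq_zero_iff (one_sub_conj_mul_ne_zero (mem_ball_zero_iff.1 ha)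
    (mem_ball_zero_iff.1 hb).le)).1 this

lemma exists_isFixedPt : ∃ p ∈ ball (0 : ℂ) 1, IsFixedPt f p := by
  set c := 2 * κ / (1 + κ ^ 2)
  have hc0 : 0 ≤ c := by
    have := (norm_nonneg _).trans (mem_closedBall_zero_iff.1 (hfκ (mem_ball_self one_pos)))
    positivity
  have hball : MapsTo f (ball 0 1) (ball 0 1) := hfκ.mono_right (closedBall_subset_ball hκ)
  set x : ℕ → ℂ := fun n ↦ f^[n] 0
  have hx : ∀ n, x n ∈ ball 0 1 := fun n ↦ hball.iterate n (mem_ball_self one_pos)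
  have hxκ : ∀ n, x (n + 1) ∈ closedBall 0 κ := fun n ↦ by
    simpa only [x, iterate_succ_apply'] using hfκ (hx n)
  have hstep : ∀ n, ‖mobius (x (n + 1)) (x (n + 2))‖ ≤ c * ‖mobius (x n) (x (n + 1))‖ := fun n ↦ by
    simpa only [x, iterate_succ_apply'] using norm_mobius_apply_le hf hfκ hκ (hx n) (hx (n + 1))
  have hdist : ∀ n, dist (x n) (x (n + 1)) ≤ 2 * ‖mobius (x 0) (x 1)‖ * c ^ n := fun n ↦ calc
    dist (x n) (x (n + 1)) ≤ 2 * ‖mobius (x n) (x (n + 1))‖ :=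
      dist_le_two_mul_norm_mobius (mem_ball_zero_iff.1 (hx n)) (mem_ball_zero_iff.1 (hx _)).le
    _ ≤ 2 * (c ^ n * ‖mobius (x 0) (x 1)‖) := by
      gcongr
      exact le_geom (u := fun n ↦ ‖mobius (x n) (x (n + 1))‖) hc0 n fun k _ ↦ hstep k
    _ = 2 * ‖mobius (x 0) (x 1)‖ * c ^ n := by ring
  obtain ⟨p, hp⟩ := cauchySeq_tendsto_of_complete
    (cauchySeq_of_le_geometric c _ (two_mul_div_one_add_sq_lt_one hκ) hdist)
  have hpκ : p ∈ closedBall 0 κ :=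
    isClosed_closedBall.mem_of_tendsto (hp.comp (tendsto_add_atTop_nat 1)) (.of_forall hxκ)
  have hpball : p ∈ ball 0 1 := closedBall_subset_ball hκ hpκ
  exact ⟨p, hpball, isFixedPt_of_tendsto_iterate hp
    (hf.differentiableAt (isOpen_ball.mem_nhds hpball)).continuousAt⟩

end FixedPoint

theorem horizontal_vertical_graphs_intersect_once_general
    (κ : ℝ) (hκ1 : κ < 1) (u v : ℂ → ℂ)
    (hu : DifferentiableOn ℂ u (Metric.ball 0 1))
    (humaps : Set.MapsTo u (Metric.ball 0 1) (Metric.ball 0 1))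
    (hv : DifferentiableOn ℂ v (Metric.ball 0 1))
    (hvmaps : Set.MapsTo v (Metric.ball 0 1) (Metric.closedBall 0 κ)) :
    ∃! p : ℂ × ℂ, p ∈ (Metric.ball (0 : ℂ) 1) ×ˢ (Metric.ball (0 : ℂ) 1) ∧
      p.2 = u p.1 ∧ p.1 = v p.2 := by
  have hf := hv.comp hu humaps
  have hfκ := hvmaps.comp humaps
  obtain ⟨p, hp, hfp⟩ := exists_isFixedPt hf hfκ hκ1
  refine ⟨(p, u p), ⟨⟨hp, humaps hp⟩, rfl, hfp.symm⟩, ?_⟩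
  rintro ⟨z, w⟩ ⟨⟨hz : z ∈ _, -⟩, rfl : w = u z, hvz : z = v (u z)⟩
  rw [eq_of_isFixedPt hf hfκ hκ1 hz hp hvz.symm hfp]

/-- **Degree (1,1) case of Proposition 1.2.** A horizontal graph
`{(z, u(z))}` and a vertical graph `{(v(w), w)}` of holomorphic functions
`u : Δ → Δ` and `v : Δ → {|z| ≤ κ}`, `κ < 1`, intersect in exactly one point
of the bidisk `Δ × Δ`. -/
theorem horizontal_vertical_graphs_intersect_once
    (κ : ℝ) (hκ0 : 0 ≤ κ) (hκ1 : κ < 1) (u v : ℂ → ℂ)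
    (hu : DifferentiableOn ℂ u (Metric.ball 0 1))
    (humaps : Set.MapsTo u (Metric.ball 0 1) (Metric.ball 0 1))
    (hv : DifferentiableOn ℂ v (Metric.ball 0 1))
    (hvmaps : Set.MapsTo v (Metric.ball 0 1) (Metric.closedBall 0 κ)) :
    ∃! p : ℂ × ℂ, p ∈ (Metric.ball (0 : ℂ) 1) ×ˢ (Metric.ball (0 : ℂ) 1) ∧
      p.2 = u p.1 ∧ p.1 = v p.2 :=
  horizontal_vertical_graphs_intersect_once_general κ hκ1 u v hu humaps hv hvmaps
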